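/- arXiv:2205.11079 — 5 statements merged into one kernel-verified Lean document; each statement's English description precedes it below -/
import Mathlib

section
/- Let φ : ℝ → ℝ be defined by φ(s) = ∫₀ˢ (1+|t|)⁻² dt. Then for all x, y ∈ ℝ one has (log(1+|x|) − log(1+|y|))² ≤ (x − y)(φ(x) − φ(y)). -/
/-!
Explicitly `φ(s) = s / (1 + |s|)`. Put `a = 1 + |x|`, `b = 1 + |y|`. The inequality
`t ≤ sinh t` at `t = log √(a/b)` gives `(log a - log b)² ≤ (a - b)² / (a b)`, while
`(x - y)(φ x - φ y) = ((x - y)² + (x - y)(x|y| - y|x|)) / (a b)`, where the cross term is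
nonnegative and `(x - y)² ≥ (|x| - |y|)² = (a - b)²`.
-/

open intervalIntegral

namespace Real

theorem sq_log_sub_log_le {a b : ℝ} (ha : 0 < a) (hb : 0 < b) :
    (log a - log b) ^ 2 ≤ (a - b) ^ 2 / (a * b) := by
  set t := (log a - log b) / 2
  have h_le : t ^ 2 ≤ sinh t ^ 2 :=
    sq_le_sq.2 <| by rw [abs_sinh]; exact self_le_sinh_iff.2 (abs_nonneg t)
  have h_sinh : 4 * sinh t ^ 2 = (a - b) ^ 2 / (a * b) := by
    have h_cosh : cosh (2 * t) = (a / b + (a / b)⁻¹) / 2 := by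
      rw [mul_div_cancel₀ _ two_ne_zero, ← log_div ha.ne' hb.ne', cosh_log (div_pos ha hb)]
    rw [cosh_two_mul, cosh_sq] at h_cosh
    field_simp at h_cosh ⊢
    linear_combination h_cosh
  calc (log a - log b) ^ 2 = 4 * t ^ 2 := by ring
    _ ≤ 4 * sinh t ^ 2 := by gcongr
    _ = _ := h_sinh

end Real

theorem integral_inv_sq_one_add {s : ℝ} (hs : -1 < s) :
    ∫ t in (0 : ℝ)..s, ((1 + t) ^ 2)⁻¹ = s / (1 + s) := by
  have h_pos : ∀ t ∈ Set.uIcc 0 s, 0 < 1 + t := fun t ht => by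
    have : -1 < min 0 s := lt_min neg_one_lt_zero hs
    linarith [ht.1]
  have h_deriv : ∀ t ∈ Set.uIcc 0 s, HasDerivAt (fun u : ℝ => u / (1 + u)) ((1 + t) ^ 2)⁻¹ t :=
    fun t ht => by
      refine ((hasDerivAt_id' t).div ((hasDerivAt_id' t).const_add 1)
        (h_pos t ht).ne').congr_deriv ?_
      ring
  have h_int : IntervalIntegrable (fun t : ℝ => ((1 + t) ^ 2)⁻¹) MeasureTheory.volume 0 s :=
    (ContinuousOn.inv₀ (by fun_prop) fun t ht => (pow_pos (h_pos t ht) 2).ne').intervalIntegrable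
  simp [integral_eq_sub_of_hasDerivAt h_deriv h_int]

theorem integral_inv_sq_one_add_abs (s : ℝ) :
    ∫ t in (0 : ℝ)..s, ((1 + |t|) ^ 2)⁻¹ = s / (1 + |s|) := by
  have h_nonneg : ∀ s : ℝ, 0 ≤ s → ∫ t in (0 : ℝ)..s, ((1 + |t|) ^ 2)⁻¹ = s / (1 + |s|) := by
    intro s hs
    rw [abs_of_nonneg hs, ← integral_inv_sq_one_add (by linarith)]
    refine integral_congr fun t ht => ?_
    simp only [abs_of_nonneg (Set.uIcc_of_le hs ▸ ht).1]
  rcases le_total 0 s with hs | hs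
  · exact h_nonneg s hs
  · calc ∫ t in (0 : ℝ)..s, ((1 + |t|) ^ 2)⁻¹ = ∫ t in (0 : ℝ)..s, ((1 + |-t|) ^ 2)⁻¹ := by
          simp only [abs_neg]
      _ = -∫ t in (0 : ℝ)..(-s), ((1 + |t|) ^ 2)⁻¹ := by
          rw [integral_comp_neg (fun t => ((1 + |t|) ^ 2)⁻¹), neg_zero, integral_symm]
      _ = s / (1 + |s|) := by
          rw [h_nonneg (-s) (neg_nonneg.2 hs), abs_neg, neg_div, neg_neg]

theorem sq_abs_sub_abs_div_le_mul_sub (x y : ℝ) :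
    (|x| - |y|) ^ 2 / ((1 + |x|) * (1 + |y|)) ≤ (x - y) * (x / (1 + |x|) - y / (1 + |y|)) := by
  have h_sq : (|x| - |y|) ^ 2 ≤ (x - y) ^ 2 :=
    sq_le_sq.2 (by simpa using abs_abs_sub_abs_le_abs_sub x y)
  have h_cross : 0 ≤ (x - y) * (x * |y| - y * |x|) := by
    rcases le_total 0 x with hx | hx <;> rcases le_total 0 y with hy | hy <;>
      simp only [abs_of_nonneg, abs_of_nonpos, hx, hy] <;>
      nlinarith [mul_nonneg (sub_nonneg.2 hx) (sub_nonneg.2 hy)]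
  have h_expand : (x - y) * (x / (1 + |x|) - y / (1 + |y|)) =
      ((x - y) ^ 2 + (x - y) * (x * |y| - y * |x|)) / ((1 + |x|) * (1 + |y|)) := by
    field_simp
    ring
  rw [h_expand]
  gcongr
  linarith

/-- For `φ(s) = ∫₀ˢ (1+|t|)⁻² dt`, one has
`(log(1+|x|) − log(1+|y|))² ≤ (x − y)(φ(x) − φ(y))` for all real `x, y`. -/
theorem sq_log_diff_le_mul_phi_diff
    (φ : ℝ → ℝ) (hφ : ∀ s : ℝ, φ s = ∫ t in (0:ℝ)..s, ((1 + |t|) ^ 2)⁻¹) :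
    ∀ x y : ℝ,
      (Real.log (1 + |x|) - Real.log (1 + |y|)) ^ 2 ≤ (x - y) * (φ x - φ y) := by
  intro x y
  rw [hφ x, hφ y, integral_inv_sq_one_add_abs, integral_inv_sq_one_add_abs]
  calc (Real.log (1 + |x|) - Real.log (1 + |y|)) ^ 2
      ≤ ((1 + |x|) - (1 + |y|)) ^ 2 / ((1 + |x|) * (1 + |y|)) :=
        Real.sq_log_sub_log_le (by positivity) (by positivity)
    _ = (|x| - |y|) ^ 2 / ((1 + |x|) * (1 + |y|)) := by rw [add_sub_add_left_eq_sub]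
    _ ≤ (x - y) * (x / (1 + |x|) - y / (1 + |y|)) := sq_abs_sub_abs_div_le_mul_sub x y
end

section
/- Let φ : ℝ → ℝ be defined by φ(s) = ∫₀ˢ (1+|t|)⁻² dt. Then for all x, y ∈ ℝ satisfying either (x ≥ y and x < 0) or (x < y and x ≥ 0), one has x² · (φ(y) − φ(x))² ≤ |y − x| · |φ(y) − φ(x)|. -/
open intervalIntegral

lemma phi_cont : Continuous (fun t : ℝ => ((1 + |t|) ^ 2)⁻¹) := by
  apply Continuous.inv₀
  · exact ((continuous_const.add continuous_abs).pow 2)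
  · intro t
    positivity

lemma phi_intble (a b : ℝ) :
    IntervalIntegrable (fun t : ℝ => ((1 + |t|) ^ 2)⁻¹) MeasureTheory.volume a b :=
  phi_cont.intervalIntegrable a b

/-- For `φ(s) = ∫₀ˢ (1+|t|)⁻² dt` and `x, y` satisfying the upwind condition
`(x ≥ y ∧ x < 0) ∨ (x < y ∧ x ≥ 0)`, one has
`x² (φ(y) − φ(x))² ≤ |y − x| |φ(y) − φ(x)|`. -/
theorem sq_mul_sq_phi_diff_le
    (φ : ℝ → ℝ) (hφ : ∀ s : ℝ, φ s = ∫ t in (0:ℝ)..s, ((1 + |t|) ^ 2)⁻¹) :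
    ∀ x y : ℝ, ((x ≥ y ∧ x < 0) ∨ (x < y ∧ x ≥ 0)) →
      x ^ 2 * (φ y - φ x) ^ 2 ≤ |y - x| * |φ y - φ x| := by
  intro x y hcond
  rcases eq_or_ne x 0 with hx0 | hx0
  · subst hx0
    simp only [zero_pow, ne_eq, OfNat.ofNat_ne_zero, not_false_eq_true, zero_mul]
    positivity
  -- x ≠ 0
  have hdiff : φ y - φ x = ∫ t in x..y, ((1 + |t|) ^ 2)⁻¹ := by
    rw [hφ, hφ]
    exact integral_interval_sub_left (phi_intble 0 y) (phi_intble 0 x)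
  have hbound : ∀ t ∈ Set.uIoc x y, ‖((1 + |t|) ^ 2)⁻¹‖ ≤ ((x:ℝ) ^ 2)⁻¹ := by
    intro t ht
    have hx2 : (0:ℝ) < x ^ 2 := by positivity
    rw [Real.norm_eq_abs, abs_of_nonneg (by positivity)]
    apply inv_anti₀ hx2
    have hxt : |x| ≤ |t| := by
      rcases hcond with ⟨hyx, hxneg⟩ | ⟨hxy, hxpos⟩
      · rw [Set.uIoc_of_ge hyx] at ht
        have ht2 := ht.2
        rw [abs_of_neg hxneg, abs_of_neg (lt_of_le_of_lt ht2 hxneg)]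
        linarith
      · rw [Set.uIoc_of_le hxy.le] at ht
        have ht1 := ht.1
        rw [abs_of_nonneg hxpos, abs_of_nonneg (le_of_lt (lt_of_le_of_lt hxpos ht1))]
        linarith
    have h1 : |x| ≤ 1 + |t| := le_add_of_nonneg_of_le zero_le_one hxt
    calc x ^ 2 = |x| ^ 2 := (sq_abs x).symm
      _ ≤ (1 + |t|) ^ 2 := by nlinarith [abs_nonneg x]
  have hnorm : |φ y - φ x| ≤ ((x:ℝ) ^ 2)⁻¹ * |y - x| := by
    rw [hdiff]
    exact intervalIntegral.norm_integral_le_of_norm_le_const hbound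
  have hx2 : (0:ℝ) < x ^ 2 := by positivity
  have key : x ^ 2 * |φ y - φ x| ≤ |y - x| := by
    calc x ^ 2 * |φ y - φ x| ≤ x ^ 2 * (((x:ℝ) ^ 2)⁻¹ * |y - x|) := by
          exact mul_le_mul_of_nonneg_left hnorm hx2.le
      _ = |y - x| := by field_simp
  calc x ^ 2 * (φ y - φ x) ^ 2 = (x ^ 2 * |φ y - φ x|) * |φ y - φ x| := by
        rw [← sq_abs (φ y - φ x)]; ring
    _ ≤ |y - x| * |φ y - φ x| := mul_le_mul_of_nonneg_right key (abs_nonneg _)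
end

section
/- Let (X, μ) be a measure space with 0 < μ(X) < ∞, let (u_m)_{m∈ℕ} be measurable functions u_m : X → ℝ converging μ-almost everywhere to a measurable function u : X → ℝ, and assume that for every m one has μ{x : u_m(x) > 0} ≤ μ(X)/2 and μ{x : u_m(x) < 0} ≤ μ(X)/2. Then μ{x : u(x) > 0} ≤ μ(X)/2 and μ{x : u(x) < 0} ≤ μ(X)/2, i.e. 0 belongs to the median set med(u). -/
/-!
For an open set `U`, almost every point with `v x ∈ U` has `u m x ∈ U` for all large `m`, so
`{v ∈ U}` lies a.e. in `liminf {u m ∈ U}`, whose measure is bounded by Fatou's lemma for sets.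
Take `U = (0, ∞)` and `U = (-∞, 0)`.
-/

open MeasureTheory Filter Set

section

variable {X : Type*} [MeasurableSpace X] (μ : Measure X)

theorem measure_liminf_atTop_le_liminf_measure (s : ℕ → Set X) :
    μ (liminf s atTop) ≤ liminf (fun n => μ (s n)) atTop := by
  rw [liminf_eq_iSup_iInf_of_nat, liminf_eq_iSup_iInf_of_nat]
  have htail_mono : Monotone fun n => ⋂ m ≥ n, s m := fun a b hab =>
    biInter_mono (fun _ hm => hab.trans hm) fun _ _ => le_rfl
  calc μ (⋃ n, ⋂ m ≥ n, s m) = ⨆ n, μ (⋂ m ≥ n, s m) := htail_mono.measure_iUnion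
    _ ≤ ⨆ n, ⨅ m ≥ n, μ (s m) :=
      iSup_mono fun _ => le_iInf₂ fun m hm => measure_mono (biInter_subset_of_mem hm)

theorem measure_liminf_atTop_le_of_forall_le {s : ℕ → Set X} {C : ENNReal}
    (h : ∀ n, μ (s n) ≤ C) : μ (liminf s atTop) ≤ C :=
  (measure_liminf_atTop_le_liminf_measure μ s).trans
    (liminf_le_of_frequently_le' (Frequently.of_forall h))

theorem preimage_ae_le_liminf_preimage_of_ae_tendsto {Y : Type*} [TopologicalSpace Y]
    {u : ℕ → X → Y} {v : X → Y} (hconv : ∀ᵐ x ∂μ, Tendsto (fun m => u m x) atTop (nhds (v x)))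
    {U : Set Y} (hU : IsOpen U) :
    v ⁻¹' U ≤ᵐ[μ] (liminf (fun m => u m ⁻¹' U) atTop : Set X) := by
  filter_upwards [hconv] with x hx hxU
  exact mem_liminf_iff_eventually_mem.mpr (hx.eventually (hU.mem_nhds hxU))

theorem measure_preimage_le_of_ae_tendsto {Y : Type*} [TopologicalSpace Y]
    {u : ℕ → X → Y} {v : X → Y} (hconv : ∀ᵐ x ∂μ, Tendsto (fun m => u m x) atTop (nhds (v x)))
    {U : Set Y} (hU : IsOpen U) {C : ENNReal} (hC : ∀ m, μ (u m ⁻¹' U) ≤ C) :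
    μ (v ⁻¹' U) ≤ C :=
  (measure_mono_ae (preimage_ae_le_liminf_preimage_of_ae_tendsto μ hconv hU)).trans
    (measure_liminf_atTop_le_of_forall_le μ hC)

end

theorem zero_mem_median_of_ae_tendsto_general
    {X : Type*} [MeasurableSpace X] (μ : Measure X)
    (u : ℕ → X → ℝ)
    (v : X → ℝ)
    (hconv : ∀ᵐ x ∂μ, Tendsto (fun m => u m x) atTop (nhds (v x)))
    (hmed : ∀ m, μ {x | u m x > 0} ≤ μ Set.univ / 2 ∧ μ {x | u m x < 0} ≤ μ Set.univ / 2) :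
    μ {x | v x > 0} ≤ μ Set.univ / 2 ∧ μ {x | v x < 0} ≤ μ Set.univ / 2 :=
  ⟨measure_preimage_le_of_ae_tendsto μ hconv isOpen_Ioi fun m => (hmed m).1,
    measure_preimage_le_of_ae_tendsto μ hconv isOpen_Iio fun m => (hmed m).2⟩

/-- If measurable functions `u_m` satisfy `μ{u_m > 0} ≤ μ(X)/2` and
`μ{u_m < 0} ≤ μ(X)/2` for every `m` and converge `μ`-a.e. to a measurable
function `u`, then `μ{u > 0} ≤ μ(X)/2` and `μ{u < 0} ≤ μ(X)/2`, i.e. `0`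
belongs to the median set of `u`. -/
theorem zero_mem_median_of_ae_tendsto
    {X : Type*} [MeasurableSpace X] (μ : Measure X)
    (hpos : 0 < μ Set.univ) (hfin : μ Set.univ < ⊤)
    (u : ℕ → X → ℝ) (hu : ∀ m, Measurable (u m))
    (v : X → ℝ) (hv : Measurable v)
    (hconv : ∀ᵐ x ∂μ, Tendsto (fun m => u m x) atTop (nhds (v x)))
    (hmed : ∀ m, μ {x | u m x > 0} ≤ μ Set.univ / 2 ∧ μ {x | u m x < 0} ≤ μ Set.univ / 2) :
    μ {x | v x > 0} ≤ μ Set.univ / 2 ∧ μ {x | v x < 0} ≤ μ Set.univ / 2 :=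
  zero_mem_median_of_ae_tendsto_general μ u v hconv hmed
end

section
/- Let m ≥ 1 and let A be a real m × m matrix such that: (i) A_{K,L} ≤ 0 for all K ≠ L; (ii) every column sum is zero, i.e. Σ_K A_{K,L} = 0 for all L; (iii) A is irreducible, in the sense that for every nonempty proper subset S of the index set there exist K ∈ S and L ∉ S with A_{K,L} ≠ 0. Then the kernel of A (viewed as a linear map ℝ^m → ℝ^m by matrix-vector multiplication) has dimension 1, and every nonzero vector U in the kernel of A satisfies either U_K > 0 for all K or U_K < 0 for all K. -/
/-!
If `U` is in the kernel, then so is `|U|`: the sign condition gives `A |U| ≤ 0` coordinatewise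
(a discrete Kato inequality), and zero column sums force the sum of these coordinates to vanish.
A nonnegative nonzero kernel vector is positive everywhere, since at a zero coordinate `K` the
equation `(A W)_K = 0` consists of nonpositive terms only, so irreducibility would be violated.
Applied to `|U|` and to `U + |U|`, this shows that a nonzero kernel vector has constant strict
sign; in particular it has no zero coordinate, so evaluation at one index is injective on the
kernel. The kernel is nontrivial because the range of `A` lies in the hyperplane `∑ U_K = 0`.
-/

open Matrix

namespace Matrix

variable {ι : Type*} [Fintype ι] {A : Matrix ι ι ℝ}

theorem sum_mulVec_eq_zero (hcol : ∀ L, ∑ K, A K L = 0) (W : ι → ℝ) :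
    ∑ K, (A *ᵥ W) K = 0 := by
  simp only [mulVec, dotProduct]
  rw [Finset.sum_comm]
  exact Finset.sum_eq_zero fun L _ => by rw [← Finset.sum_mul, hcol L, zero_mul]

theorem mulVec_abs_apply_le_abs (hoff : ∀ K L, K ≠ L → A K L ≤ 0) (U : ι → ℝ) (K : ι) :
    (A *ᵥ |U|) K ≤ |(A *ᵥ U) K| := by
  obtain ⟨ε, hε, hεK⟩ : ∃ ε : ℝ, |ε| = 1 ∧ |U K| = ε * U K := by
    rcases le_total 0 (U K) with h | h
    · exact ⟨1, abs_one, by rw [abs_of_nonneg h, one_mul]⟩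
    · exact ⟨-1, by simp, by rw [abs_of_nonpos h, neg_one_mul]⟩
  have hterm : ∀ L, A K L * |U L| ≤ A K L * (ε * U L) := fun L => by
    rcases eq_or_ne K L with rfl | hKL
    · rw [hεK]
    · refine mul_le_mul_of_nonpos_left ?_ (hoff K L hKL)
      calc ε * U L ≤ |ε * U L| := le_abs_self _
        _ = |U L| := by rw [abs_mul, hε, one_mul]
  calc (A *ᵥ |U|) K = ∑ L, A K L * |U L| := rfl
    _ ≤ ∑ L, A K L * (ε * U L) := Finset.sum_le_sum fun L _ => hterm L
    _ = ε * (A *ᵥ U) K := by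
      simp only [mulVec, dotProduct, Finset.mul_sum]
      exact Finset.sum_congr rfl fun L _ => by ring
    _ ≤ |(A *ᵥ U) K| := by
      calc ε * (A *ᵥ U) K ≤ |ε * (A *ᵥ U) K| := le_abs_self _
        _ = |(A *ᵥ U) K| := by rw [abs_mul, hε, one_mul]

theorem mulVec_abs_eq_zero (hoff : ∀ K L, K ≠ L → A K L ≤ 0) (hcol : ∀ L, ∑ K, A K L = 0)
    {U : ι → ℝ} (hU : A *ᵥ U = 0) : A *ᵥ |U| = 0 := by
  have hnonpos : ∀ K, (A *ᵥ |U|) K ≤ 0 := fun K => by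
    simpa [hU] using mulVec_abs_apply_le_abs hoff U K
  funext K
  exact (Finset.sum_eq_zero_iff_of_nonpos fun K _ => hnonpos K).1
    (sum_mulVec_eq_zero hcol _) K (Finset.mem_univ K)

theorem pos_of_mulVec_eq_zero (hoff : ∀ K L, K ≠ L → A K L ≤ 0)
    (hirr : ∀ S : Set ι, S.Nonempty → S ≠ Set.univ → ∃ K ∈ S, ∃ L ∉ S, A K L ≠ 0)
    {W : ι → ℝ} (hW : A *ᵥ W = 0) (hnn : 0 ≤ W) (hne : W ≠ 0) (K : ι) : 0 < W K := by
  by_contra hK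
  have hzero : W K = 0 := le_antisymm (not_lt.1 hK) (hnn K)
  obtain ⟨K, hK, L, hL, hKL⟩ := hirr {J | W J = 0} ⟨K, hzero⟩ fun h =>
    hne (funext fun J => (h ▸ Set.mem_univ J : J ∈ {J | W J = 0}))
  have hterm : ∀ J, A K J * W J ≤ 0 := fun J => by
    rcases eq_or_ne K J with rfl | hKJ
    · rw [show W K = 0 from hK, mul_zero]
    · exact mul_nonpos_of_nonpos_of_nonneg (hoff K J hKJ) (hnn J)
  have hrow : ∑ J, A K J * W J = 0 := congrFun hW K
  exact mul_ne_zero hKL hL <|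
    (Finset.sum_eq_zero_iff_of_nonpos fun J _ => hterm J).1 hrow L (Finset.mem_univ L)

theorem pos_or_neg_of_mulVec_eq_zero (hoff : ∀ K L, K ≠ L → A K L ≤ 0)
    (hcol : ∀ L, ∑ K, A K L = 0)
    (hirr : ∀ S : Set ι, S.Nonempty → S ≠ Set.univ → ∃ K ∈ S, ∃ L ∉ S, A K L ≠ 0)
    {U : ι → ℝ} (hU : A *ᵥ U = 0) (hne : U ≠ 0) : (∀ K, U K > 0) ∨ (∀ K, U K < 0) := by
  have habs : A *ᵥ |U| = 0 := mulVec_abs_eq_zero hoff hcol hU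
  by_cases hsum : U + |U| = 0
  · have hpos := pos_of_mulVec_eq_zero hoff hirr habs (abs_nonneg U) (by simpa using hne)
    refine Or.inr fun K => ?_
    have hK : U K + |U K| = 0 := congrFun hsum K
    linarith [hpos K, show |U| K = |U K| from rfl]
  · have hker : A *ᵥ (U + |U|) = 0 := by rw [mulVec_add, hU, habs, add_zero]
    have hpos := pos_of_mulVec_eq_zero hoff hirr hker
      (fun K => neg_le_iff_add_nonneg.1 (neg_abs_le (U K))) hsum
    refine Or.inl fun K => ?_
    by_contra hK
    have hK' : U K + |U K| = 0 := by rw [abs_of_nonpos (not_lt.1 hK), add_neg_cancel]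
    exact (hpos K).ne' hK'

theorem ker_mulVecLin_ne_bot [Nonempty ι] (hcol : ∀ L, ∑ K, A K L = 0) :
    LinearMap.ker A.mulVecLin ≠ ⊥ := by
  rw [Ne, LinearMap.ker_eq_bot, LinearMap.injective_iff_surjective]
  intro hsurj
  obtain ⟨W, hW⟩ := hsurj fun _ => 1
  have hsum := sum_mulVec_eq_zero hcol W
  rw [mulVecLin_apply] at hW
  simp [hW] at hsum

end Matrix

theorem Submodule.finrank_eq_one_of_eval_injective {𝕜 ι : Type*} [Field 𝕜] [Finite ι]
    {p : Submodule 𝕜 (ι → 𝕜)} (hp : p ≠ ⊥) (i : ι) (h : ∀ v ∈ p, v i = 0 → v = 0) :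
    Module.finrank 𝕜 p = 1 := by
  have hinj : Function.Injective ((LinearMap.proj i : (ι → 𝕜) →ₗ[𝕜] 𝕜).comp p.subtype) := by
    rw [← LinearMap.ker_eq_bot, LinearMap.ker_eq_bot']
    exact fun v hv => Subtype.ext (h v v.2 hv)
  refine le_antisymm ?_ (Nat.one_le_iff_ne_zero.2 (Submodule.finrank_eq_zero.not.2 hp))
  simpa using LinearMap.finrank_le_finrank_of_injective hinj

/-- For a real `m × m` matrix with nonpositive off-diagonal entries, zero column
sums, and irreducible (every nonempty proper subset of indices has an outgoing
nonzero entry), the kernel of `A` is one-dimensional and every nonzero kernel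
vector has all entries positive or all entries negative. -/
theorem kernel_dim_one_and_sign
    (m : ℕ) (hm : 1 ≤ m) (A : Matrix (Fin m) (Fin m) ℝ)
    (hoff : ∀ K L : Fin m, K ≠ L → A K L ≤ 0)
    (hcol : ∀ L : Fin m, ∑ K, A K L = 0)
    (hirr : ∀ S : Set (Fin m), S.Nonempty → S ≠ Set.univ →
      ∃ K ∈ S, ∃ L ∉ S, A K L ≠ 0) :
    Module.finrank ℝ (LinearMap.ker A.mulVecLin) = 1 ∧
    ∀ U : Fin m → ℝ, A.mulVec U = 0 → U ≠ 0 →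
      (∀ K, U K > 0) ∨ (∀ K, U K < 0) := by
  let K₀ : Fin m := ⟨0, hm⟩
  have : Nonempty (Fin m) := ⟨K₀⟩
  have hsign : ∀ U : Fin m → ℝ, A *ᵥ U = 0 → U ≠ 0 → (∀ K, U K > 0) ∨ (∀ K, U K < 0) :=
    fun _ => pos_or_neg_of_mulVec_eq_zero hoff hcol hirr
  refine ⟨Submodule.finrank_eq_one_of_eval_injective (ker_mulVecLin_ne_bot hcol) K₀
    fun U hU hU₀ => ?_, hsign⟩
  by_contra hne
  rcases hsign U hU hne with hpos | hneg
  · exact (hpos K₀).ne' hU₀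
  · exact (hneg K₀).ne hU₀
end

section
/- Let (X, μ) be a measure space with 0 < μ(X) < ∞, let u : X → ℝ be measurable, and let v : X → ℝ be measurable with c ≤ v(x) ≤ C for all x ∈ X, where 0 < c ≤ C. Then there exists a unique λ ∈ ℝ such that med̲(u + λ·v) = 0, where med̲(w) = inf{t ∈ ℝ : μ{x : w(x) > t} ≤ μ(X)/2}. -/
/-!
For `a ≤ b` the functions `u + a v` and `u + b v` differ pointwise by an amount in
`[(b - a) c, (b - a) C]`. The lower median is monotone and commutes with adding constants, so the
same bounds hold for `l ↦ med̲ (u + l v)`: this function is Lipschitz and grows at rate at least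
`c > 0`, hence is a bijection of `ℝ` and vanishes exactly once. Finiteness and positivity of `μ`
are what make the set defining `med̲` nonempty and bounded below.
-/

open MeasureTheory Filter Topology Set

namespace MeasureTheory

variable {X : Type*} [MeasurableSpace X] (μ : Measure X)

theorem tendsto_measure_setOf_lt_atTop [IsFiniteMeasure μ] {w : X → ℝ} (hw : Measurable w) :
    Tendsto (fun t => μ {x | t < w x}) atTop (𝓝 0) := by
  have hanti : Antitone fun t : ℝ => {x | t < w x} := fun s t hst x hx => hst.trans_lt hx
  have hempty : ⋂ t : ℝ, {x | t < w x} = ∅ :=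
    iInter_eq_empty_iff.2 fun x => ⟨w x, lt_irrefl (w x)⟩
  simpa [hempty, Function.comp_def] using tendsto_measure_iInter_atTop (μ := μ)
    (fun t => (measurableSet_lt measurable_const hw).nullMeasurableSet) hanti
    ⟨0, measure_ne_top μ _⟩

theorem tendsto_measure_setOf_lt_atBot (w : X → ℝ) :
    Tendsto (fun t => μ {x | t < w x}) atBot (𝓝 (μ univ)) := by
  have hanti : Antitone fun t : ℝ => {x | t < w x} := fun s t hst x hx => hst.trans_lt hx
  have huniv : ⋃ t : ℝ, {x | t < w x} = univ :=
    iUnion_eq_univ_iff.2 fun x => ⟨w x - 1, by simp⟩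
  simpa [huniv, Function.comp_def] using tendsto_measure_iUnion_atBot (μ := μ) hanti

def halfMassLevels (w : X → ℝ) : Set ℝ := {t | μ {x | t < w x} ≤ μ univ / 2}

noncomputable def lowerMedian (w : X → ℝ) : ℝ := sInf (halfMassLevels μ w)

variable [IsFiniteMeasure μ] [NeZero μ]

theorem halfMassLevels_nonempty {w : X → ℝ} (hw : Measurable w) :
    (halfMassLevels μ w).Nonempty :=
  ((tendsto_measure_setOf_lt_atTop μ hw).eventually
    (ge_mem_nhds (ENNReal.half_pos (NeZero.ne (μ univ))))).exists

theorem bddBelow_halfMassLevels (w : X → ℝ) : BddBelow (halfMassLevels μ w) := by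
  obtain ⟨s, hs⟩ := ((tendsto_measure_setOf_lt_atBot μ w).eventually
    (lt_mem_nhds (ENNReal.half_lt_self (NeZero.ne (μ univ)) (measure_ne_top μ univ)))).exists
  refine ⟨s, fun t ht => le_of_not_gt fun hts => ?_⟩
  exact (hs.trans_le (measure_mono fun x hx => hts.trans hx)).not_ge ht

theorem lowerMedian_mono {w w' : X → ℝ} (hw' : Measurable w') (h : w ≤ w') :
    lowerMedian μ w ≤ lowerMedian μ w' :=
  csInf_le_csInf (bddBelow_halfMassLevels μ w) (halfMassLevels_nonempty μ hw')
    fun _ ht => (measure_mono fun x hx => hx.trans_le (h x)).trans ht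

theorem lowerMedian_add_const {w : X → ℝ} (hw : Measurable w) (a : ℝ) :
    lowerMedian μ (fun x => w x + a) = lowerMedian μ w + a := by
  have himage : halfMassLevels μ (fun x => w x + a) = (· + a) '' halfMassLevels μ w := by
    ext t
    simp [halfMassLevels, Set.image_add_right, ← sub_eq_add_neg, sub_lt_iff_lt_add]
  rw [lowerMedian, himage]
  exact ((OrderIso.addRight a).map_csInf' (halfMassLevels_nonempty μ hw)
    (bddBelow_halfMassLevels μ w)).symm

theorem lowerMedian_add_mul_sub_mem_Icc {u v : X → ℝ} (hu : Measurable u) (hv : Measurable v)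
    {c C : ℝ} (hbd : ∀ x, c ≤ v x ∧ v x ≤ C) {a b : ℝ} (hab : a ≤ b) :
    lowerMedian μ (fun x => u x + b * v x) - lowerMedian μ (fun x => u x + a * v x) ∈
      Icc ((b - a) * c) ((b - a) * C) := by
  have hmeas : ∀ l : ℝ, Measurable fun x => u x + l * v x :=
    fun l => hu.add (measurable_const.mul hv)
  have hshift : ∀ x, u x + b * v x = u x + a * v x + (b - a) * v x := fun x => by ring
  have hlower : lowerMedian μ (fun x => u x + a * v x) + (b - a) * c ≤
      lowerMedian μ (fun x => u x + b * v x) := by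
    rw [← lowerMedian_add_const μ (hmeas a)]
    refine lowerMedian_mono μ (hmeas b) fun x => ?_
    simp only [hshift]
    gcongr
    exact (hbd x).1
  have hupper : lowerMedian μ (fun x => u x + b * v x) ≤
      lowerMedian μ (fun x => u x + a * v x) + (b - a) * C := by
    rw [← lowerMedian_add_const μ (hmeas a)]
    refine lowerMedian_mono μ ((hmeas a).add_const _) fun x => ?_
    simp only [hshift]
    gcongr
    exact (hbd x).2
  constructor <;> linarith

end MeasureTheory

theorem Real.bijective_of_mul_le_sub_le_mul {f : ℝ → ℝ} {c C : ℝ} (hc : 0 < c)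
    (hf : ∀ a b, a ≤ b → f b - f a ∈ Icc ((b - a) * c) ((b - a) * C)) :
    Function.Bijective f := by
  have hstrict : StrictMono f := fun a b hab =>
    sub_pos.1 ((mul_pos (sub_pos.2 hab) hc).trans_le (hf a b hab.le).1)
  have hcont : Continuous f := by
    refine (LipschitzWith.of_le_add_mul' (max C 0) fun a b => ?_).continuous
    rcases le_total a b with hab | hba
    · linarith [hstrict.monotone hab,
        mul_nonneg (le_max_right C 0) (dist_nonneg (x := a) (y := b))]
    · rw [Real.dist_eq, abs_of_nonneg (sub_nonneg.2 hba)]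
      nlinarith [(hf b a hba).2, le_max_left C 0]
  have htop : Tendsto f atTop atTop := by
    refine tendsto_atTop_mono' _ ?_ (tendsto_atTop_add_const_left _ (f 0)
      (tendsto_id.atTop_mul_const hc))
    filter_upwards [eventually_ge_atTop 0] with b hb
    show f 0 + b * c ≤ f b
    linarith [(hf 0 b hb).1]
  have hbot : Tendsto f atBot atBot := by
    refine tendsto_atBot_mono' _ ?_ (tendsto_atBot_add_const_left _ (f 0)
      (tendsto_id.atBot_mul_const hc))
    filter_upwards [eventually_le_atBot 0] with a ha
    show f a ≤ f 0 + a * c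
    linarith [(hf a 0 ha).1]
  exact ⟨hstrict.injective, hcont.surjective htop hbot⟩

theorem exists_unique_shift_zero_lower_median_general
    {X : Type*} [MeasurableSpace X] (μ : Measure X)
    (hpos : 0 < μ Set.univ) (hfin : μ Set.univ < ⊤)
    (u : X → ℝ) (hu : Measurable u)
    (v : X → ℝ) (hv : Measurable v)
    (c C : ℝ) (hc : 0 < c)
    (hbd : ∀ x, c ≤ v x ∧ v x ≤ C) :
    ∃! l : ℝ,
      sInf {t : ℝ | μ {x | u x + l * v x > t} ≤ μ Set.univ / 2} = 0 := by
  have : IsFiniteMeasure μ := ⟨hfin⟩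
  have : NeZero μ := ⟨Measure.measure_univ_pos.1 hpos⟩
  change ∃! l : ℝ, lowerMedian μ (fun x => u x + l * v x) = 0
  exact (Real.bijective_of_mul_le_sub_le_mul hc
    fun a b hab => lowerMedian_add_mul_sub_mem_Icc μ hu hv hbd hab).existsUnique 0

/-- If `v` is measurable with `0 < c ≤ v(x) ≤ C` for all `x`, then for any
measurable `u` there exists a unique real `λ` such that the lower median of
`u + λ v` vanishes, where the lower median is
`med̲(w) = inf {t | μ{w > t} ≤ μ(X)/2}`. -/
theorem exists_unique_shift_zero_lower_median
    {X : Type*} [MeasurableSpace X] (μ : Measure X)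
    (hpos : 0 < μ Set.univ) (hfin : μ Set.univ < ⊤)
    (u : X → ℝ) (hu : Measurable u)
    (v : X → ℝ) (hv : Measurable v)
    (c C : ℝ) (hc : 0 < c) (hcC : c ≤ C)
    (hbd : ∀ x, c ≤ v x ∧ v x ≤ C) :
    ∃! l : ℝ,
      sInf {t : ℝ | μ {x | u x + l * v x > t} ≤ μ Set.univ / 2} = 0 :=
  exists_unique_shift_zero_lower_median_general μ hpos hfin u hu v hv c C hc hbd
end
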